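/- Fix α ∈ [0,1], set β = 1−α, and let w be the transition probabilities of rule 140A: w(1|b) = 0 for b ∈ {000,001,100,101}, w(1|b) = 1 for b ∈ {010,011,111}, w(1|110) = 1−α, and w(0|b) = 1 − w(1|b). Let n ≥ 1 and let b = b_0 b_1 … b_{2n} be a binary word of length 2n+1 (central index n) of the following form for some k with 1 ≤ k ≤ n+1: b_{n−1} = 1, b_n = 1, b_{n+i} = 1 for 1 ≤ i ≤ k−1, and (when k ≤ n) b_{n+k} = 0, with all remaining symbols arbitrary. Then the n-step transition probability satisfies: w^n(1|b) = β^n if k = 1; w^n(1|b) = α^{k−1}·β^{n−k+1}·C(n−1, k−1) + β^{n−k+1}·Σ_{j=0}^{k−2} C(n−k+j, j)·α^j if 2 ≤ k ≤ n; and w^n(1|b) = 1 if k = n+1, where C(·,·) denotes the binomial coefficient. -/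
import Mathlib


/-- Block transition probability `w(a|b) = ∏_j w(a_j | b_j b_{j+1} b_{j+2})` of a
radius-1 binary probabilistic CA with local transition probabilities `w`. -/
noncomputable def wBlock (w : Bool → Bool → Bool → Bool → ℝ) (a b : List Bool) : ℝ :=
  ∏ j ∈ Finset.range a.length,
    w (a.getD j false) (b.getD j false) (b.getD (j + 1) false) (b.getD (j + 2) false)

/-- `n`-step block transition probabilities: `w⁰` is the identity, `w¹ = w`, and
`wⁿ(a|b) = ∑_{b' ∈ {0,1}^{|a|+2(n−1)}} w^{n−1}(a|b')·w(b'|b)`. -/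
noncomputable def wIter (w : Bool → Bool → Bool → Bool → ℝ) :
    ℕ → List Bool → List Bool → ℝ
  | 0, a, b => if a = b then 1 else 0
  | (n + 1), a, b =>
      ∑ b' : Fin (a.length + 2 * n) → Bool,
        wIter w n a (List.ofFn b') * wBlock w (List.ofFn b') b

/-- Local transition probabilities of rule 140A (α-asynchronous rule 140):
`w(1|b) = 0` for `b ∈ {000,001,100,101}`, `w(1|b) = 1` for `b ∈ {010,011,111}`,
`w(1|110) = 1 − α`, and `w(0|b) = 1 − w(1|b)`. -/
noncomputable def w140A (α : ℝ) (a x1 x2 x3 : Bool) : ℝ :=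
  let w1 : ℝ :=
    if x2 = false then 0
    else if x1 = false then 1
    else if x3 = true then 1 else 1 - α
  if a then w1 else 1 - w1

lemma w140A_sum (α : ℝ) (x1 x2 x3 : Bool) :
    w140A α false x1 x2 x3 + w140A α true x1 x2 x3 = 1 := by
  simp [w140A]

lemma w140A_true_one (α : ℝ) (x1 x3 : Bool) (h : x1 = false ∨ x3 = true) :
    w140A α true x1 true x3 = 1 := by
  rcases h with h | h <;> simp [w140A, h]

lemma w140A_false_zero (α : ℝ) (x1 x3 : Bool) (h : x1 = false ∨ x3 = true) :
    w140A α false x1 true x3 = 0 := by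
  rcases h with h | h <;> simp [w140A, h]

lemma w140A_center_zero (α : ℝ) (x1 x3 : Bool) : w140A α true x1 false x3 = 0 := by
  simp [w140A]

lemma w140A_110_t (α : ℝ) : w140A α true true true false = 1 - α := by simp [w140A]
lemma w140A_110_f (α : ℝ) : w140A α false true true false = 1 - (1 - α) := by simp [w140A]

lemma ofFn_getD {L : ℕ} (f : Fin L → Bool) (j : ℕ) (h : j < L) :
    (List.ofFn f).getD j false = f ⟨j, h⟩ := by
  rw [List.getD_eq_getElem?_getD, List.getElem?_ofFn]
  simp [List.ofFnNthVal, h]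

lemma sum_prod_bool {L : ℕ} (f : Fin L → Bool → ℝ) :
    ∑ g : Fin L → Bool, ∏ j, f j (g j) = ∏ j, (f j false + f j true) := by
  rw [← Fintype.prod_sum]
  congr 1; ext j
  rw [Fintype.sum_bool]; ring

noncomputable def Qd (α β : ℝ) (n k : ℕ) : ℝ :=
  ∑ i ∈ Finset.range k, (Nat.choose n i : ℝ) * α ^ i * β ^ (n - i)

lemma Qd_one (α β : ℝ) (n : ℕ) : Qd α β n 1 = β ^ n := by
  simp [Qd]

lemma Qd_full (α β : ℝ) (hβ : β = 1 - α) (n : ℕ) : Qd α β n (n + 1) = 1 := by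
  have h := add_pow α β n
  have hab : α + β = 1 := by rw [hβ]; ring
  rw [hab, one_pow] at h
  rw [Qd, h]
  apply Finset.sum_congr rfl
  intro i hi
  ring

lemma Qd_rec (α β : ℝ) (n m : ℕ) (hm : m ≤ n) :
    Qd α β (n + 1) (m + 1) = β * Qd α β n (m + 1) + α * Qd α β n m := by
  induction m with
  | zero => simp [Qd]; ring
  | succ m ih =>
      have hm' : m ≤ n := by omega
      rw [Qd, Finset.sum_range_succ, ← Qd, ih hm']
      rw [show Qd α β n (m+1+1) = Qd α β n (m+1) + (Nat.choose n (m+1):ℝ) * α^(m+1) * β^(n-(m+1)) from by rw [Qd, Finset.sum_range_succ, ← Qd]]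
      rw [show Qd α β n (m+1) = Qd α β n m + (Nat.choose n m:ℝ) * α^m * β^(n-m) from by rw [Qd, Finset.sum_range_succ, ← Qd]]
      have hc : (Nat.choose (n+1) (m+1) : ℝ) = Nat.choose n m + Nat.choose n (m+1) := by
        rw [Nat.choose_succ_succ]; push_cast; ring
      have e1 : n + 1 - (m + 1) = n - m := by omega
      have e2 : n - m = (n - (m+1)) + 1 := by omega
      rw [hc, e1, e2]
      ring

lemma Qd_kk (α β : ℝ) (hβ : β = 1 - α) (k : ℕ) : Qd α β k k = 1 - α ^ k := by
  have h := Qd_full α β hβ k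
  rw [Qd, Finset.sum_range_succ, ← Qd] at h
  simp at h
  linarith [h]

lemma sum_choose_pascal (α : ℝ) (m c : ℕ) :
    ∑ j ∈ Finset.range (c + 1), (Nat.choose (m + 1 + j) j : ℝ) * α ^ j =
      (∑ j ∈ Finset.range (c + 1), (Nat.choose (m + j) j : ℝ) * α ^ j) +
        α * ∑ j ∈ Finset.range c, (Nat.choose (m + 1 + j) j : ℝ) * α ^ j := by
  rw [Finset.sum_range_succ' (fun j => (Nat.choose (m + 1 + j) j : ℝ) * α ^ j) c,
      Finset.sum_range_succ' (fun j => (Nat.choose (m + j) j : ℝ) * α ^ j) c]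
  rw [Finset.mul_sum]
  have : ∀ j ∈ Finset.range c,
      (Nat.choose (m + 1 + (j+1)) (j+1) : ℝ) * α ^ (j+1) =
        (Nat.choose (m + (j+1)) (j+1) : ℝ) * α ^ (j+1) +
          α * ((Nat.choose (m + 1 + j) j : ℝ) * α ^ j) := by
    intro j _
    have hc : Nat.choose (m + 1 + (j+1)) (j+1) = Nat.choose (m + (j+1)) (j+1) + Nat.choose (m + 1 + j) j := by
      have e1 : m + 1 + (j + 1) = (m + j + 1) + 1 := by omega
      rw [e1, Nat.choose_succ_succ (m + j + 1) j,
        show m + (j+1) = m + j + 1 from by omega,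
        show m + 1 + j = m + j + 1 from by omega, Nat.add_comm]
    rw [hc]; push_cast; ring
  rw [Finset.sum_congr rfl this, Finset.sum_add_distrib]
  simp
  ring

lemma Qd_eq_G (α β : ℝ) (hβ : β = 1 - α) :
    ∀ s t m, t + m = s →
    Qd α β (t + 1 + m) (t + 1) =
      α ^ t * β ^ (m + 1) * (Nat.choose (t + m) t : ℝ) +
        β ^ (m + 1) * ∑ j ∈ Finset.range t, (Nat.choose (m + j) j : ℝ) * α ^ j := by
  intro s
  induction s using Nat.strong_induction_on with
  | _ s ih =>
    intro t m hs
    match t, m with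
    | 0, m =>
        rw [show (0:ℕ)+1+m = m+1 from by omega, Qd_one]
        simp
    | (t'+1), 0 =>
        subst hβ
        rw [show t'+1+1+0 = t'+1+1 from by omega, Qd_kk α _ rfl]
        have hg := geom_sum_mul α (t'+1+1)
        rw [Finset.sum_range_succ] at hg
        have hs1 : ∀ j ∈ Finset.range (t'+1), (Nat.choose (0+j) j : ℝ) * α ^ j = α ^ j := by
          intro j _; rw [Nat.zero_add, Nat.choose_self]; push_cast; ring
        rw [Finset.sum_congr rfl hs1, Nat.add_zero, Nat.choose_self]
        push_cast
        linear_combination hg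
    | (t'+1), (m'+1) =>
        have e1 : t'+1+1+(m'+1) = (t'+1+m'+1)+1 := by omega
        rw [e1, Qd_rec α β (t'+1+m'+1) (t'+1) (by omega)]
        have ihA := ih (t'+1+m') (by omega) (t'+1) m' rfl
        have ihB := ih (t'+(m'+1)) (by omega) t' (m'+1) rfl
        rw [show t'+1+(m'+1) = t'+1+1+m' from by omega] at ihB
        rw [show t'+1+m'+1 = t'+1+1+m' from by omega, ihA, ihB]
        have hP := sum_choose_pascal α m' t'
        rw [hP]
        have hc : (Nat.choose (t'+1+(m'+1)) (t'+1) : ℝ) =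
            (Nat.choose (t'+(m'+1)) t' : ℝ) + (Nat.choose (t'+1+m') (t'+1) : ℝ) := by
          rw [show t'+1+(m'+1) = (t'+1+m')+1 from by omega,
            Nat.choose_succ_succ (t'+1+m') t',
            show t'+(m'+1) = t'+1+m' from by omega]
          push_cast; ring
        rw [hc]
        ring

lemma wIter_succ (w : Bool → Bool → Bool → Bool → ℝ) (n : ℕ) (b : List Bool) :
    wIter w (n+1) [true] b = ∑ b' : Fin (1 + 2*n) → Bool,
      wIter w n [true] (List.ofFn b') * wBlock w (List.ofFn b') b := rfl

lemma wBlock_ofFn (w : Bool → Bool → Bool → Bool → ℝ) {L : ℕ} (g : Fin L → Bool) (b : List Bool) :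
    wBlock w (List.ofFn g) b = ∏ j : Fin L,
      w (g j) (b.getD j false) (b.getD (j+1) false) (b.getD (j+2) false) := by
  rw [wBlock, List.length_ofFn, ← Fin.prod_univ_eq_prod_range]
  apply Finset.prod_congr rfl
  intro j _
  rw [ofFn_getD g j j.isLt]

lemma zero_stays (α : ℝ) : ∀ n (b : List Bool), b.length = 2*n+1 → b.getD n false = false →
    wIter (w140A α) n [true] b = 0 := by
  intro n
  induction n with
  | zero =>
      intro b hb h0
      rw [show wIter (w140A α) 0 [true] b = if [true] = b then 1 else 0 from rfl, if_neg]
      intro hcon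
      rw [← hcon] at h0
      simp at h0
  | succ n ih =>
      intro b hb h0
      rw [wIter_succ]
      apply Finset.sum_eq_zero
      intro g _
      cases hv : g ⟨n, by omega⟩
      · rw [ih (List.ofFn g) (by rw [List.length_ofFn]; omega)
          (by rw [ofFn_getD g n (by omega)]; exact hv)]
        ring
      · rw [mul_eq_zero]; right
        rw [wBlock_ofFn]
        apply Finset.prod_eq_zero (Finset.mem_univ (⟨n, by omega⟩ : Fin (1+2*n)))
        rw [hv]
        simp only []
        rw [h0]
        exact w140A_center_zero α _ _

lemma main140 (α β : ℝ) (hβ : β = 1 - α) :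
    ∀ n k, 1 ≤ k → k ≤ n + 1 → ∀ b : List Bool, b.length = 2*n+1 →
      b.getD (n-1) false = true → b.getD n false = true →
      (∀ i, 1 ≤ i → i ≤ k-1 → b.getD (n+i) false = true) →
      (k ≤ n → b.getD (n+k) false = false) →
      wIter (w140A α) n [true] b = Qd α β n k := by
  intro n
  induction n with
  | zero =>
      intro k hk1 hk2 b hb h1 h2 h3 h4
      have hk : k = 1 := by omega
      subst hk
      obtain ⟨x, hx⟩ := List.length_eq_one_iff.mp (by omega : b.length = 1)
      subst hx
      have hxt : x = true := by simpa using h2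
      subst hxt
      rw [Qd_one]
      norm_num
      rfl
  | succ n ih =>
      intro k hk1 hk2 b hb h1 h2 h3 h4
      have h1' : b.getD n false = true := by simpa using h1
      have hbm : ∀ m, n ≤ m → m ≤ n + k → b.getD m false = true := by
        intro m hm1 hm2
        rcases Nat.lt_or_ge m (n+2) with hm | hm
        · rcases Nat.lt_or_ge m (n+1) with hm' | hm'
          · have : m = n := by omega
            rw [this]; exact h1'
          · have : m = n + 1 := by omega
            rw [this]; exact h2
        · have : m = (n+1) + (m - n - 1) := by omega
          rw [this]; exact h3 _ (by omega) (by omega)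
      rw [wIter_succ]
      have hblock : ∀ g : Fin (1+2*n) → Bool, wBlock (w140A α) (List.ofFn g) b =
          ∏ j : Fin (1+2*n), (fun (j : Fin (1+2*n)) (x : Bool) =>
            w140A α x (b.getD j false) (b.getD (j+1) false) (b.getD (j+2) false)) j (g j) :=
        fun g => wBlock_ofFn (w140A α) g b
      rcases Nat.lt_or_ge (n+1) k with hbig | hsmall
      · -- k = n + 2 case
        have hk : k = n + 2 := by omega
        subst hk
        have key : ∀ g : Fin (1+2*n) → Bool,
            wIter (w140A α) n [true] (List.ofFn g) * wBlock (w140A α) (List.ofFn g) b =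
            wBlock (w140A α) (List.ofFn g) b := by
          intro g
          by_cases hg : ∀ j : Fin (1+2*n), n - 1 ≤ (j:ℕ) → g j = true
          · rw [ih (n+1) (by omega) (by omega) (List.ofFn g) (by rw [List.length_ofFn]; omega)
              (by rw [ofFn_getD g (n-1) (by omega)]; exact hg _ (by simp))
              (by rw [ofFn_getD g n (by omega)]; exact hg _ (by simp only [] <;> simp <;> omega))
              (by intro i hi1 hi2
                  rw [ofFn_getD g (n+i) (by omega)]
                  exact hg _ (by simp only [] <;> simp <;> omega))
              (by intro hcon; omega)]
            rw [Qd_full α β hβ n, one_mul]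
          · push_neg at hg
            obtain ⟨j, hj1, hj2⟩ := hg
            simp only [ne_eq, Bool.not_eq_true] at hj2
            have hz : (fun (j : Fin (1+2*n)) (x : Bool) =>
                w140A α x (b.getD j false) (b.getD (j+1) false) (b.getD (j+2) false)) j (g j) = 0 := by
              rw [hj2]
              simp only []
              rw [hbm ((j:ℕ)+1) (by omega) (by omega), hbm ((j:ℕ)+2) (by omega) (by omega)]
              exact w140A_false_zero α _ _ (Or.inr rfl)
            rw [hblock g, Finset.prod_eq_zero (Finset.mem_univ j) hz]
            ring
        rw [Finset.sum_congr rfl (fun g _ => key g)]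
        have : ∀ g : Fin (1+2*n) → Bool, wBlock (w140A α) (List.ofFn g) b =
            ∏ j : Fin (1+2*n), (fun (j : Fin (1+2*n)) (x : Bool) =>
              w140A α x (b.getD j false) (b.getD (j+1) false) (b.getD (j+2) false)) j (g j) := hblock
        rw [Finset.sum_congr rfl (fun g _ => hblock g), sum_prod_bool (fun (j : Fin (1+2*n)) (x : Bool) => w140A α x (b.getD j false) (b.getD (j+1) false) (b.getD (j+2) false))]
        rw [Finset.prod_congr rfl (fun j _ => w140A_sum α _ _ _), Finset.prod_const_one]
        rw [show n + 2 = (n+1) + 1 from rfl, Qd_full α β hβ (n+1)]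
      · -- k ≤ n + 1 case
        set c : Bool → ℝ := fun v => if v then Qd α β n k else (if k = 1 then 0 else Qd α β n (k-1)) with hc
        set j0 : Fin (1+2*n) := ⟨n + (k-1), by omega⟩ with hj0
        have key : ∀ g : Fin (1+2*n) → Bool,
            wIter (w140A α) n [true] (List.ofFn g) * wBlock (w140A α) (List.ofFn g) b =
            c (g j0) * wBlock (w140A α) (List.ofFn g) b := by
          intro g
          by_cases hg : (∀ j : Fin (1+2*n), n - 1 ≤ (j:ℕ) → (j:ℕ) < n + (k-1) → g j = true) ∧
              (∀ j : Fin (1+2*n), (j:ℕ) = n + k → g j = false)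
          · obtain ⟨hgt, hgf⟩ := hg
            congr 1
            cases hv : g j0
            · -- g j0 = false
              by_cases hk1' : k = 1
              · subst hk1'
                rw [zero_stays α n (List.ofFn g) (by rw [List.length_ofFn]; omega)
                  (by rw [ofFn_getD g n (by omega)]
                      have : (⟨n, by omega⟩ : Fin (1+2*n)) = j0 := by
                        apply Fin.ext; simp [hj0]
                      rw [this]; exact hv)]
                simp [hc]
              · rw [ih (k-1) (by omega) (by omega) (List.ofFn g) (by rw [List.length_ofFn]; omega)
                  (by rw [ofFn_getD g (n-1) (by omega)]
                      exact hgt _ (by exact Nat.le_refl _) (by show n-1 < n+(k-1); omega))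
                  (by rw [ofFn_getD g n (by omega)]
                      exact hgt _ (by simp) (by simp only [] <;> simp <;> omega))
                  (by intro i hi1 hi2
                      rw [ofFn_getD g (n+i) (by omega)]
                      exact hgt _ (by simp only [] <;> simp <;> omega) (by simp only [] <;> simp <;> omega))
                  (by intro _
                      rw [ofFn_getD g (n+(k-1)) (by omega)]
                      exact hv)]
                simp [hc, hk1']
            · -- g j0 = true : pattern with k
              rw [ih k hk1 (by omega) (List.ofFn g) (by rw [List.length_ofFn]; omega)
                (by rw [ofFn_getD g (n-1) (by omega)]
                    rcases Nat.lt_or_ge ((n:ℕ)-1) (n+(k-1)) with hlt | hge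
                    · exact hgt _ (by exact Nat.le_refl _) (by exact hlt)
                    · have : (⟨n-1, by omega⟩ : Fin (1+2*n)) = j0 := by
                        apply Fin.ext; simp [hj0]; omega
                      rw [this]; exact hv)
                (by rw [ofFn_getD g n (by omega)]
                    rcases Nat.lt_or_ge (n:ℕ) (n+(k-1)) with hlt | hge
                    · exact hgt _ (by simp) (by simp only [] <;> simp <;> omega)
                    · have : (⟨n, by omega⟩ : Fin (1+2*n)) = j0 := by
                        apply Fin.ext; simp [hj0]; omega
                      rw [this]; exact hv)
                (by intro i hi1 hi2
                    rw [ofFn_getD g (n+i) (by omega)]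
                    rcases Nat.lt_or_ge (n+i) (n+(k-1)) with hlt | hge
                    · exact hgt _ (by simp only [] <;> simp <;> omega) (by simp only [] <;> simp <;> omega)
                    · have : (⟨n+i, by omega⟩ : Fin (1+2*n)) = j0 := by
                        apply Fin.ext; simp [hj0]; omega
                      rw [this]; exact hv)
                (by intro hkn
                    rw [ofFn_getD g (n+k) (by omega)]
                    exact hgf _ (by simp))]
              simp [hc]
          · -- violation : block is zero
            have hzero : ∃ j : Fin (1+2*n), (fun (j : Fin (1+2*n)) (x : Bool) =>
                w140A α x (b.getD j false) (b.getD (j+1) false) (b.getD (j+2) false)) j (g j) = 0 := by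
              rw [not_and_or] at hg
              rcases hg with hg | hg
              · push_neg at hg
                obtain ⟨j, hj1, hj2, hj3⟩ := hg
                refine ⟨j, ?_⟩
                simp only [ne_eq, Bool.not_eq_true] at hj3
                rw [hj3]
                simp only []
                rw [hbm ((j:ℕ)+1) (by omega) (by omega), hbm ((j:ℕ)+2) (by omega) (by omega)]
                exact w140A_false_zero α _ _ (Or.inr rfl)
              · push_neg at hg
                obtain ⟨j, hj1, hj2⟩ := hg
                refine ⟨j, ?_⟩
                simp only [ne_eq, Bool.not_eq_false] at hj2
                rw [hj2]
                simp only []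
                rw [show (j:ℕ)+1 = (n+1)+k from by omega, h4 (by omega)]
                exact w140A_center_zero α _ _
            obtain ⟨j, hj⟩ := hzero
            rw [hblock g, Finset.prod_eq_zero (Finset.mem_univ j) hj]
            ring
        rw [Finset.sum_congr rfl (fun g _ => key g)]
        have step2 : ∀ g : Fin (1+2*n) → Bool,
            c (g j0) * wBlock (w140A α) (List.ofFn g) b =
            ∏ j : Fin (1+2*n), (fun (j : Fin (1+2*n)) (x : Bool) =>
              if j = j0 then c x * w140A α x (b.getD j false) (b.getD (j+1) false) (b.getD (j+2) false)
              else w140A α x (b.getD j false) (b.getD (j+1) false) (b.getD (j+2) false)) j (g j) := by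
          intro g
          rw [hblock g]
          rw [Finset.prod_eq_prod_diff_singleton_mul (Finset.mem_univ j0),
              Finset.prod_eq_prod_diff_singleton_mul (Finset.mem_univ j0)
                (fun j => (fun (j : Fin (1+2*n)) (x : Bool) =>
                  if j = j0 then c x * w140A α x (b.getD j false) (b.getD (j+1) false) (b.getD (j+2) false)
                  else w140A α x (b.getD j false) (b.getD (j+1) false) (b.getD (j+2) false)) j (g j))]
          simp only [eq_self_iff_true, if_true]
          have : ∀ j ∈ Finset.univ \ {j0}, (fun (j : Fin (1+2*n)) (x : Bool) =>
              if j = j0 then c x * w140A α x (b.getD j false) (b.getD (j+1) false) (b.getD (j+2) false)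
              else w140A α x (b.getD j false) (b.getD (j+1) false) (b.getD (j+2) false)) j (g j) =
              w140A α (g j) (b.getD j false) (b.getD (j+1) false) (b.getD (j+2) false) := by
            intro j hj
            have : j ≠ j0 := by
              intro hcon; subst hcon; simp at hj
            simp only [if_neg this]
          rw [Finset.prod_congr rfl this]
          ring
        rw [Finset.sum_congr rfl (fun g _ => step2 g), sum_prod_bool (fun (j : Fin (1+2*n)) (x : Bool) => if j = j0 then c x * w140A α x (b.getD j false) (b.getD (j+1) false) (b.getD (j+2) false) else w140A α x (b.getD j false) (b.getD (j+1) false) (b.getD (j+2) false))]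
        rw [Finset.prod_eq_single j0 ?h1 ?h2]
        case h1 =>
          intro j _ hj
          simp only [if_neg hj]
          exact w140A_sum α _ _ _
        case h2 => intro h; simp at h
        simp only [eq_self_iff_true, if_true]
        -- now compute the j0 factor
        have hx1 : b.getD ((j0:ℕ)) false = true := hbm _ (by simp [hj0]) (by simp [hj0] <;> omega)
        have hx2 : b.getD ((j0:ℕ)+1) false = true := hbm _ (by simp [hj0] <;> omega) (by simp [hj0] <;> omega)
        have hx3 : b.getD ((j0:ℕ)+2) false = false := by
          rw [show (j0:ℕ)+2 = (n+1)+k from by simp [hj0] <;> omega]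
          exact h4 (by omega)
        rw [hx1, hx2, hx3, w140A_110_t, w140A_110_f, ← hβ]
        -- c false * (1 - β) + c true * β = Qd α β (n+1) k
        rw [hc]
        simp only []
        by_cases hk1' : k = 1
        · subst hk1'
          norm_num
          rw [Qd_one, Qd_one]
          rw [hβ]
          ring
        · simp only [if_neg hk1']
          obtain ⟨m, hm⟩ : ∃ m, k = m + 1 := ⟨k-1, by omega⟩
          subst hm
          rw [Qd_rec α β n m (by omega)]
          simp only [Nat.add_sub_cancel]
          norm_num
          rw [hβ]
          ring


/-- `n`-step transition probabilities of rule 140A on words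
`b = b_0 … b_{2n}` (central index `n`) of the form
`★^{n-1} 1 1 1^{k-1} 0 ★^{n-k}` for some `1 ≤ k ≤ n+1`. -/
theorem rule140A_nstep_transition
    (α : ℝ) (hα0 : 0 ≤ α) (hα1 : α ≤ 1) (β : ℝ) (hβ : β = 1 - α)
    (n : ℕ) (hn : 1 ≤ n) (k : ℕ) (hk1 : 1 ≤ k) (hk2 : k ≤ n + 1)
    (b : List Bool) (hb : b.length = 2 * n + 1)
    (hb1 : b.getD (n - 1) false = true) (hb2 : b.getD n false = true)
    (hb3 : ∀ i : ℕ, 1 ≤ i → i ≤ k - 1 → b.getD (n + i) false = true)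
    (hb4 : k ≤ n → b.getD (n + k) false = false) :
    (k = 1 → wIter (w140A α) n [true] b = β ^ n) ∧
    (2 ≤ k → k ≤ n → wIter (w140A α) n [true] b =
      α ^ (k - 1) * β ^ (n - k + 1) * (Nat.choose (n - 1) (k - 1) : ℝ) +
        β ^ (n - k + 1) *
          ∑ j ∈ Finset.range (k - 1), (Nat.choose (n - k + j) j : ℝ) * α ^ j) ∧
    (k = n + 1 → wIter (w140A α) n [true] b = 1) := by
  have hmain := main140 α β hβ n k hk1 hk2 b hb hb1 hb2 hb3 hb4
  refine ⟨?_, ?_, ?_⟩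
  · intro hk; subst hk
    rw [hmain, Qd_one]
  · intro h2k hkn
    rw [hmain]
    have hG := Qd_eq_G α β hβ ((k-1)+(n-k)) (k-1) (n-k) rfl
    rw [show (k-1)+1+(n-k) = n from by omega, show (k-1)+1 = k from by omega,
        show (k-1)+(n-k) = n-1 from by omega] at hG
    rw [hG]
  · intro hk; subst hk
    rw [hmain, Qd_full α β hβ n]
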